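/- arXiv:1907.02353 — 2 statements merged into one kernel-verified Lean document; each statement's English description precedes it below -/
import Mathlib

section
/- Let G be a finite undirected graph with disjoint nonempty vertex sets S and T such that some (S,T)-path exists. Then there is a unique minimum closest (S,T)-cut: a minimum edge (S,T)-cut X such that no other (S,T)-cut X' satisfies |X'| ≤ |X| and R(X',S) ⊆ R(X,S). -/
open SimpleGraph

variable {V : Type*}

/-- `X` is an edge `(S,T)`-cut: after deleting the edges of `X`,
no vertex of `S` can reach a vertex of `T`. -/
def EdgeCut (G : SimpleGraph V) (S T : Set V) (X : Finset (Sym2 V)) : Prop :=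
  ∀ s ∈ S, ∀ t ∈ T, ¬ (G.deleteEdges ↑X).Reachable s t

/-- `X` is a minimum edge `(S,T)`-cut. -/
def MinEdgeCut (G : SimpleGraph V) (S T : Set V) (X : Finset (Sym2 V)) : Prop :=
  EdgeCut G S T X ∧ ∀ Y : Finset (Sym2 V), EdgeCut G S T Y → X.card ≤ Y.card

/-- `R(X,S)`: vertices reachable from `S` in `G` deprived of the edges of `X`. -/
def Rside (G : SimpleGraph V) (X : Finset (Sym2 V)) (S : Set V) : Set V :=
  {v | ∃ s ∈ S, (G.deleteEdges ↑X).Reachable s v}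

/-- A minimum closest `(S,T)`-cut: a minimum cut `Z` such that no other cut `X'`
satisfies `|X'| ≤ |Z|` and `R(X',S) ⊆ R(Z,S)`. -/
def MinClosestCut (G : SimpleGraph V) (S T : Set V) (Z : Finset (Sym2 V)) : Prop :=
  MinEdgeCut G S T Z ∧
    ∀ X' : Finset (Sym2 V), EdgeCut G S T X' → X' ≠ Z →
      ¬ (X'.card ≤ Z.card ∧ Rside G X' S ⊆ Rside G Z S)

/-! ### Auxiliary machinery -/

open scoped Classical in
/-- The set of edges of `G` crossing from `A` to its complement. -/
noncomputable def cutOf [Fintype V] (G : SimpleGraph V) (A : Set V) : Finset (Sym2 V) :=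
  G.edgeFinset.filter (fun e => ∃ u v, e = s(u,v) ∧ u ∈ A ∧ v ∉ A)

lemma mem_cutOf [Fintype V] {G : SimpleGraph V} {A : Set V} {e : Sym2 V} :
    e ∈ cutOf G A ↔ e ∈ G.edgeSet ∧ ∃ u v, e = s(u,v) ∧ u ∈ A ∧ v ∉ A := by
  classical
  rw [cutOf, Finset.mem_filter, mem_edgeFinset]

lemma adj_mem_cutOf [Fintype V] {G : SimpleGraph V} {A : Set V} {u v : V} (h : G.Adj u v)
    (hu : u ∈ A) (hv : v ∉ A) : s(u,v) ∈ cutOf G A :=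
  mem_cutOf.2 ⟨h, u, v, rfl, hu, hv⟩

lemma reach_cutOf_mem [Fintype V] {G : SimpleGraph V} {A : Set V} {u v : V}
    (h : (G.deleteEdges ↑(cutOf G A)).Reachable u v) (hu : u ∈ A) : v ∈ A := by
  obtain ⟨w⟩ := h
  induction w with
  | nil => exact hu
  | @cons _ b _ hadj p ih =>
    rw [deleteEdges_adj] at hadj
    by_cases hb : b ∈ A
    · exact ih hb
    · exact absurd (Finset.mem_coe.2 (adj_mem_cutOf hadj.1 hu hb)) hadj.2

lemma subset_Rside {G : SimpleGraph V} {X : Finset (Sym2 V)} {S : Set V} :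
    S ⊆ Rside G X S :=
  fun s hs => ⟨s, hs, Reachable.refl s⟩

lemma cutOf_Rside_subset [Fintype V] {G : SimpleGraph V} {X : Finset (Sym2 V)} {S : Set V} :
    cutOf G (Rside G X S) ⊆ X := by
  intro e he
  rw [mem_cutOf] at he
  obtain ⟨hE, u, v, rfl, hu, hv⟩ := he
  by_contra hX
  obtain ⟨s, hs, hr⟩ := hu
  refine hv ⟨s, hs, hr.trans (Adj.reachable ?_)⟩
  rw [deleteEdges_adj]
  exact ⟨(G.mem_edgeSet).1 hE, fun h => hX (Finset.mem_coe.1 h)⟩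

lemma edgeCut_cutOf [Fintype V] {G : SimpleGraph V} {S T A : Set V}
    (hSA : S ⊆ A) (hTA : ∀ t ∈ T, t ∉ A) : EdgeCut G S T (cutOf G A) :=
  fun s hs t ht h => hTA t ht (reach_cutOf_mem h (hSA hs))

lemma Rside_cutOf_subset [Fintype V] {G : SimpleGraph V} {S A : Set V} (hSA : S ⊆ A) :
    Rside G (cutOf G A) S ⊆ A := by
  rintro v ⟨s, hs, hr⟩
  exact reach_cutOf_mem hr (hSA hs)

lemma edgeCut_cutOf_Rside [Fintype V] {G : SimpleGraph V} {S T : Set V} {X : Finset (Sym2 V)}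
    (hX : EdgeCut G S T X) : EdgeCut G S T (cutOf G (Rside G X S)) := by
  refine edgeCut_cutOf subset_Rside ?_
  rintro t ht ⟨s, hs, hr⟩
  exact hX s hs t ht hr

lemma cutOf_submod [Fintype V] (G : SimpleGraph V) (A B : Set V) :
    (cutOf G (A ∩ B)).card + (cutOf G (A ∪ B)).card
      ≤ (cutOf G A).card + (cutOf G B).card := by
  classical
  have h1 : cutOf G (A ∩ B) ∪ cutOf G (A ∪ B) ⊆ cutOf G A ∪ cutOf G B := by
    intro e he
    rcases Finset.mem_union.1 he with he | he
    · obtain ⟨hE, u, v, rfl, hu, hv⟩ := mem_cutOf.1 he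
      rcases (by tauto : v ∉ A ∨ v ∉ B) with hv' | hv'
      · exact Finset.mem_union_left _ (adj_mem_cutOf ((G.mem_edgeSet).1 hE) hu.1 hv')
      · exact Finset.mem_union_right _ (adj_mem_cutOf ((G.mem_edgeSet).1 hE) hu.2 hv')
    · obtain ⟨hE, u, v, rfl, hu, hv⟩ := mem_cutOf.1 he
      rcases hu with hu' | hu'
      · exact Finset.mem_union_left _
          (adj_mem_cutOf ((G.mem_edgeSet).1 hE) hu' (fun h => hv (Or.inl h)))
      · exact Finset.mem_union_right _
          (adj_mem_cutOf ((G.mem_edgeSet).1 hE) hu' (fun h => hv (Or.inr h)))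
  have h2 : cutOf G (A ∩ B) ∩ cutOf G (A ∪ B) ⊆ cutOf G A ∩ cutOf G B := by
    intro e he
    obtain ⟨heP, heQ⟩ := Finset.mem_inter.1 he
    obtain ⟨hE, u, v, rfl, hu, hv⟩ := mem_cutOf.1 heP
    obtain ⟨-, u', v', heq, hu', hv'⟩ := mem_cutOf.1 heQ
    rcases Sym2.eq_iff.1 heq with ⟨rfl, rfl⟩ | ⟨rfl, rfl⟩
    · exact Finset.mem_inter.2
        ⟨adj_mem_cutOf ((G.mem_edgeSet).1 hE) hu.1 (fun h => hv' (Or.inl h)),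
         adj_mem_cutOf ((G.mem_edgeSet).1 hE) hu.2 (fun h => hv' (Or.inr h))⟩
    · exact absurd (Or.inl hu.1) hv'
  calc (cutOf G (A ∩ B)).card + (cutOf G (A ∪ B)).card
      = (cutOf G (A ∩ B) ∪ cutOf G (A ∪ B)).card
        + (cutOf G (A ∩ B) ∩ cutOf G (A ∪ B)).card :=
        (Finset.card_union_add_card_inter _ _).symm
    _ ≤ (cutOf G A ∪ cutOf G B).card + (cutOf G A ∩ cutOf G B).card :=
        Nat.add_le_add (Finset.card_le_card h1) (Finset.card_le_card h2)
    _ = (cutOf G A).card + (cutOf G B).card := Finset.card_union_add_card_inter _ _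


/-- If some `(S,T)`-path exists, then there is a unique minimum
closest `(S,T)`-cut. -/
theorem exists_unique_min_closest_cut
    [Fintype V] (G : SimpleGraph V) (S T : Set V)
    (hST : Disjoint S T) (hS : S.Nonempty) (hT : T.Nonempty)
    (hpath : ∃ s ∈ S, ∃ t ∈ T, G.Reachable s t) :
    ∃! Z : Finset (Sym2 V), MinClosestCut G S T Z := by
  classical
  have hbig : EdgeCut G S T G.edgeFinset := by
    intro s hs t ht h
    obtain ⟨w⟩ := h
    cases w with
    | nil => exact Set.disjoint_left.1 hST hs ht
    | cons hadj p =>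
      rw [deleteEdges_adj] at hadj
      exact hadj.2 (by simpa using hadj.1)
  set Cuts : Finset (Finset (Sym2 V)) :=
    Finset.univ.filter (fun X => EdgeCut G S T X) with hCutsDef
  have hmemCuts : ∀ X, X ∈ Cuts ↔ EdgeCut G S T X := by
    intro X; simp [hCutsDef]
  have hne : Cuts.Nonempty := ⟨G.edgeFinset, (hmemCuts _).2 hbig⟩
  obtain ⟨X₀, hX₀, hX₀min⟩ := Cuts.exists_min_image Finset.card hne
  set lam := X₀.card with hlamdef
  have hlam : ∀ Y, EdgeCut G S T Y → lam ≤ Y.card :=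
    fun Y hY => hX₀min Y ((hmemCuts _).2 hY)
  have hX₀cut : EdgeCut G S T X₀ := (hmemCuts _).1 hX₀
  set MC : Finset (Finset (Sym2 V)) := Cuts.filter (fun X => X.card ≤ lam) with hMCdef
  have hmemMC : ∀ X, X ∈ MC ↔ EdgeCut G S T X ∧ X.card ≤ lam := by
    intro X; simp [hMCdef, hmemCuts]
  have hMCne : MC.Nonempty := ⟨X₀, (hmemMC _).2 ⟨hX₀cut, le_rfl⟩⟩
  obtain ⟨Z, hZMC, hZmin⟩ := MC.exists_min_image (fun X => (Rside G X S).ncard) hMCne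
  have hZcut : EdgeCut G S T Z := ((hmemMC _).1 hZMC).1
  have hZcard : Z.card = lam := le_antisymm ((hmemMC _).1 hZMC).2 (hlam Z hZcut)
  -- the key claim: the side of Z is contained in the side of any small cut
  have key : ∀ X', EdgeCut G S T X' → X'.card ≤ lam → Rside G Z S ⊆ Rside G X' S := by
    intro X' hX' hc
    set A := Rside G Z S with hA
    set B := Rside G X' S with hB
    have hSA : S ⊆ A := subset_Rside
    have hSB : S ⊆ B := subset_Rside
    have hA_le : (cutOf G A).card ≤ lam :=
      le_trans (Finset.card_le_card cutOf_Rside_subset) hZcard.le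
    have hB_le : (cutOf G B).card ≤ lam :=
      le_trans (Finset.card_le_card cutOf_Rside_subset) hc
    have hUcut : EdgeCut G S T (cutOf G (A ∪ B)) := by
      refine edgeCut_cutOf (fun s hs => Or.inl (hSA hs)) ?_
      rintro t ht (⟨s, hs, hr⟩ | ⟨s, hs, hr⟩)
      · exact hZcut s hs t ht hr
      · exact hX' s hs t ht hr
    have hU_ge : lam ≤ (cutOf G (A ∪ B)).card := hlam _ hUcut
    have hsubmod := cutOf_submod G A B
    have hI_le : (cutOf G (A ∩ B)).card ≤ lam := by omega
    have hIcut : EdgeCut G S T (cutOf G (A ∩ B)) := by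
      refine edgeCut_cutOf (fun s hs => ⟨hSA hs, hSB hs⟩) ?_
      rintro t ht ⟨⟨s, hs, hr⟩, -⟩
      exact hZcut s hs t ht hr
    have hImem : cutOf G (A ∩ B) ∈ MC := (hmemMC _).2 ⟨hIcut, hI_le⟩
    have hmin := hZmin _ hImem
    have hCsub : Rside G (cutOf G (A ∩ B)) S ⊆ A ∩ B :=
      Rside_cutOf_subset (fun s hs => ⟨hSA hs, hSB hs⟩)
    have hCA : Rside G (cutOf G (A ∩ B)) S ⊆ A := fun v hv => (hCsub hv).1
    have hAeq : Rside G (cutOf G (A ∩ B)) S = A :=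
      Set.eq_of_subset_of_ncard_le hCA hmin (Set.toFinite _)
    intro v hv
    rw [← hAeq] at hv
    exact (hCsub hv).2
  -- canonical form of small cuts
  have canon : ∀ X', EdgeCut G S T X' → X'.card ≤ lam → cutOf G (Rside G X' S) = X' := by
    intro X' hX' hc
    refine Finset.eq_of_subset_of_card_le cutOf_Rside_subset ?_
    exact le_trans hc (hlam _ (edgeCut_cutOf_Rside hX'))
  have hmincut : MinEdgeCut G S T Z := ⟨hZcut, fun Y hY => hZcard ▸ hlam Y hY⟩
  have hclosest : ∀ X' : Finset (Sym2 V), EdgeCut G S T X' → X' ≠ Z →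
      ¬ (X'.card ≤ Z.card ∧ Rside G X' S ⊆ Rside G Z S) := by
    rintro X' hX' hneq ⟨hcard, hsub⟩
    have hc' : X'.card ≤ lam := hcard.trans hZcard.le
    have h1 : Rside G Z S ⊆ Rside G X' S := key X' hX' hc'
    have hAB : Rside G X' S = Rside G Z S := subset_antisymm hsub h1
    have e1 : cutOf G (Rside G X' S) = X' := canon X' hX' hc'
    have e2 : cutOf G (Rside G Z S) = Z := canon Z hZcut hZcard.le
    exact hneq (by rw [← e1, hAB, e2])
  refine ⟨Z, ⟨hmincut, hclosest⟩, ?_⟩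
  intro Z' hZ'
  by_contra hne'
  have hZ'cut : EdgeCut G S T Z' := hZ'.1.1
  have hZ'lam : Z'.card ≤ lam := hZcard ▸ hZ'.1.2 Z hZcut
  refine hZ'.2 Z hZcut (fun h => hne' h.symm) ⟨?_, key Z' hZ'cut hZ'lam⟩
  exact hZcard.le.trans (hlam Z' hZ'cut)
end

section
/- Let G be a finite undirected graph with disjoint vertex sets S and T, and let Z_1,...,Z_k be the drainage of (G,S,T). Then the cuts Z_i are pairwise disjoint edge sets, and the source-side reachable sets are strictly nested: R(Z_i,S) ⊊ R(Z_{i+1},S) for all 1 ≤ i ≤ k-1. -/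
open SimpleGraph

variable {V : Type*}

/-- `G` deprived of the vertex set `U` (kept on the same vertex type). -/
def deprive (G : SimpleGraph V) (U : Set V) : SimpleGraph V where
  Adj u v := G.Adj u v ∧ u ∉ U ∧ v ∉ U
  symm := ⟨fun _ _ ⟨h, hu, hv⟩ => ⟨h.symm, hv, hu⟩⟩
  loopless := ⟨fun u ⟨h, _, _⟩ => G.irrefl h⟩

/-- `V^T(Z)` relative to sources `S`: the endpoints of edges of `Z` that are not
reachable from `S` once `Z` is removed. -/
def nextSources (G : SimpleGraph V) (Z : Finset (Sym2 V)) (S : Set V) : Set V :=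
  {v | v ∉ Rside G Z S ∧ ∃ u, s(u, v) ∈ Z}

/-- The drainage `Z 1, ..., Z k` of the instance `(G,S,T)` with minimum cut size `p`:
`Z 1` is the minimum closest `(S,T)`-cut, and `Z (i+1)` is the minimum closest
`(S_{i+1},T)`-cut of size `p` in `G` deprived of `R(Z i, S)`; the construction stops
at `k`, when no further cut of size `p` exists. -/
def IsDrainage (G : SimpleGraph V) (S T : Set V) (p k : ℕ)
    (Z : ℕ → Finset (Sym2 V)) : Prop :=
  1 ≤ k ∧
  MinClosestCut G S T (Z 1) ∧ (Z 1).card = p ∧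
  (∀ i, 1 ≤ i → i < k →
    MinClosestCut (deprive G (Rside G (Z i) S)) (nextSources G (Z i) S) T (Z (i + 1)) ∧
      (Z (i + 1)).card = p) ∧
  (∀ X : Finset (Sym2 V),
    EdgeCut (deprive G (Rside G (Z k) S)) (nextSources G (Z k) S) T X → p < X.card)

/-!
Every edge of a minimum cut `Z` joins `R(Z,S)` to its complement: an edge that does not can
be dropped from `Z`, leaving a smaller cut. This crossing property passes from `Z i` to
`Z (i+1)` in `G` itself, because `R(Z (i+1), S)` is `R(Z i, S)` together with what `S_{i+1}`
reaches in `G` deprived of `R(Z i, S)`. As the edges of `Z (i+1)` avoid `R(Z i, S)`, the sets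
`R(Z i, S)` increase with `i`, so every later cut avoids `R(Z i, S)` while every edge of `Z i`
has an endpoint there; and the far endpoint of an edge of `Z i` lies in `R(Z (i+1), S)`
but not in `R(Z i, S)`.
-/

def IsCrossing (G : SimpleGraph V) (S : Set V) (W : Finset (Sym2 V)) : Prop :=
  ∀ ⦃a b⦄, s(a, b) ∈ W → G.Adj a b ∧ (a ∈ Rside G W S ↔ b ∉ Rside G W S)

section Rside

variable {G : SimpleGraph V} {S T : Set V} {W W' X : Finset (Sym2 V)} {v w : V}

lemma mem_rside_of_mem (hv : v ∈ S) : v ∈ Rside G X S :=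
  ⟨v, hv, Reachable.refl v⟩

lemma mem_rside_of_adj (hv : v ∈ Rside G X S) (hadj : G.Adj v w) (hvw : s(v, w) ∉ X) :
    w ∈ Rside G X S := by
  obtain ⟨s, hs, hr⟩ := hv
  exact ⟨s, hs, hr.trans (deleteEdges_adj.mpr ⟨hadj, by simpa using hvw⟩).reachable⟩

lemma rside_subset_of_closed {C : Set V} (hS : S ⊆ C)
    (hC : ∀ ⦃v w⦄, v ∈ C → G.Adj v w → s(v, w) ∉ X → w ∈ C) :
    Rside G X S ⊆ C := by
  rintro v ⟨s, hs, hr⟩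
  rw [reachable_iff_reflTransGen] at hr
  induction hr with
  | refl => exact hS hs
  | tail _ hadj ih =>
    obtain ⟨hadj, hX⟩ := deleteEdges_adj.mp hadj
    exact hC ih hadj (by simpa using hX)

lemma EdgeCut.of_rside_subset (hW : EdgeCut G S T W) (h : Rside G X S ⊆ Rside G W S) :
    EdgeCut G S T X := by
  intro s hs t ht hr
  obtain ⟨s', hs', hr'⟩ := h ⟨s, hs, hr⟩
  exact hW s' hs' t ht hr'

lemma MinEdgeCut.isCrossing (h : MinEdgeCut G S T W) : IsCrossing G S W := by
  classical
  intro a b hab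
  by_contra hcross
  have hsub : Rside G (W.erase s(a, b)) S ⊆ Rside G W S := by
    refine rside_subset_of_closed (fun s hs => mem_rside_of_mem hs) ?_
    intro v w hv hadj hvw
    by_cases he : s(v, w) = s(a, b)
    · rcases Sym2.eq_iff.mp he with ⟨rfl, rfl⟩ | ⟨rfl, rfl⟩
      · tauto
      · have := hadj.symm
        tauto
    · exact mem_rside_of_adj hv hadj fun hW => hvw (Finset.mem_erase.mpr ⟨he, hW⟩)
  have hle := h.2 _ (h.1.of_rside_subset hsub)
  have hlt := Finset.card_erase_lt_of_mem hab
  omega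

lemma rside_subset_rside (hW' : ∀ ⦃a b⦄, s(a, b) ∈ W' → a ∉ Rside G W S) :
    Rside G W S ⊆ Rside G W' S := by
  have hsub : Rside G W S ⊆ Rside G W S ∩ Rside G W' S := by
    refine rside_subset_of_closed (fun s hs => ⟨mem_rside_of_mem hs, mem_rside_of_mem hs⟩) ?_
    rintro v w ⟨hv, hv'⟩ hadj hvw
    exact ⟨mem_rside_of_adj hv hadj hvw, mem_rside_of_adj hv' hadj fun h => hW' h hv⟩
  exact fun v hv => (hsub hv).2

end Rside

namespace IsCrossing

variable {G : SimpleGraph V} {S C : Set V} {W W' : Finset (Sym2 V)}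

lemma exists_mk_eq (hW : IsCrossing G S W) {e : Sym2 V} (he : e ∈ W) :
    ∃ a b, s(a, b) = e ∧ G.Adj a b ∧ a ∈ Rside G W S ∧ b ∉ Rside G W S := by
  induction e using Sym2.ind with
  | _ a b =>
    obtain ⟨hadj, hab⟩ := hW he
    by_cases ha : a ∈ Rside G W S
    · exact ⟨a, b, rfl, hadj, ha, hab.mp ha⟩
    · exact ⟨b, a, Sym2.eq_swap, hadj.symm, by tauto, ha⟩

lemma notMem_of_deprive (hW : IsCrossing (deprive G C) S W) {a b : V} (hab : s(a, b) ∈ W) :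
    a ∉ C :=
  (hW hab).1.2.1

lemma rside_eq_union (hW : IsCrossing G S W)
    (hW' : ∀ ⦃a b⦄, s(a, b) ∈ W' → a ∉ Rside G W S) :
    Rside G W' S =
      Rside G W S ∪ Rside (deprive G (Rside G W S)) W' (nextSources G W S) := by
  set R := Rside G W S
  refine (rside_subset_of_closed (fun s hs => Or.inl (mem_rside_of_mem hs)) ?_).antisymm
    (Set.union_subset (rside_subset_rside hW') (rside_subset_of_closed ?_ ?_))
  · intro v w hv hadj hvw
    by_cases hvR : v ∈ R
    · by_cases hW_vw : s(v, w) ∈ W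
      · exact Or.inr (mem_rside_of_mem ⟨(hW hW_vw).2.mp hvR, v, hW_vw⟩)
      · exact Or.inl (mem_rside_of_adj hvR hadj hW_vw)
    · by_cases hwR : w ∈ R
      · exact Or.inl hwR
      · exact Or.inr (mem_rside_of_adj (hv.resolve_left hvR) ⟨hadj, hvR, hwR⟩ hvw)
  · rintro v ⟨hvR, u, huv⟩
    have huR : u ∈ R := by have := (hW huv).2; tauto
    exact mem_rside_of_adj (rside_subset_rside hW' huR) (hW huv).1 fun h => hW' h huR
  · intro v w hv hadj hvw
    exact mem_rside_of_adj hv hadj.1 hvw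

lemma next (hW : IsCrossing G S W)
    (hW' : IsCrossing (deprive G (Rside G W S)) (nextSources G W S) W') :
    IsCrossing G S W' := by
  intro a b hab
  obtain ⟨⟨hadj, haR, hbR⟩, hcross⟩ := hW' hab
  have hsplit := hW.rside_eq_union fun _ _ h => hW'.notMem_of_deprive h
  refine ⟨hadj, ?_⟩
  simpa only [hsplit, Set.mem_union, haR, hbR, false_or] using hcross

lemma disjoint (hW : IsCrossing G S W) (hC : Rside G W S ⊆ C)
    (hW' : ∀ ⦃a b⦄, s(a, b) ∈ W' → a ∉ C) : Disjoint W W' := by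
  refine Finset.disjoint_left.mpr fun e he he' => ?_
  obtain ⟨a, b, rfl, -, ha, -⟩ := hW.exists_mk_eq he
  exact hW' he' (hC ha)

lemma rside_ssubset (hW : IsCrossing G S W) (hne : W.Nonempty)
    (hW' : ∀ ⦃a b⦄, s(a, b) ∈ W' → a ∉ Rside G W S) : Rside G W S ⊂ Rside G W' S := by
  have hsub := rside_subset_rside hW'
  obtain ⟨e, he⟩ := hne
  obtain ⟨a, b, rfl, hadj, ha, hb⟩ := hW.exists_mk_eq he
  exact (Set.ssubset_iff_of_subset hsub).mpr
    ⟨b, mem_rside_of_adj (hsub ha) hadj fun h => hW' h ha, hb⟩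

end IsCrossing

namespace IsDrainage

variable {G : SimpleGraph V} {S T : Set V} {p k : ℕ} {Z : ℕ → Finset (Sym2 V)}

lemma card_eq (hZ : IsDrainage G S T p k Z) {i : ℕ} (hi : 1 ≤ i) (hik : i ≤ k) :
    (Z i).card = p := by
  obtain _ | _ | i := i
  · omega
  · exact hZ.2.2.1
  · exact (hZ.2.2.2.1 (i + 1) (by omega) (by omega)).2

lemma nonempty (hZ : IsDrainage G S T p k Z) {i : ℕ} (hi : 1 ≤ i) (hik : i ≤ k) :
    (Z i).Nonempty := by
  classical
  refine Finset.card_pos.mp (hZ.card_eq hi hik ▸ Nat.pos_of_ne_zero fun hp => ?_)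
  -- with `p = 0` the last cut is empty, so there are no next sources and `∅` is a cut of size `p`
  have hZk : Z k = ∅ := Finset.card_eq_zero.mp (hp ▸ hZ.card_eq hZ.1 le_rfl)
  have hcut : EdgeCut (deprive G (Rside G (Z k) S)) (nextSources G (Z k) S) T ∅ :=
    fun _ hs => absurd hs.2 (by simp [hZk])
  simpa [hp] using hZ.2.2.2.2 ∅ hcut

lemma isCrossing_succ (hZ : IsDrainage G S T p k Z) {i : ℕ} (hi : 1 ≤ i) (hik : i < k) :
    IsCrossing (deprive G (Rside G (Z i) S)) (nextSources G (Z i) S) (Z (i + 1)) :=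
  (hZ.2.2.2.1 i hi hik).1.1.isCrossing

lemma isCrossing (hZ : IsDrainage G S T p k Z) {i : ℕ} (hi : 1 ≤ i) (hik : i ≤ k) :
    IsCrossing G S (Z i) := by
  induction i, hi using Nat.le_induction with
  | base => exact hZ.2.1.1.isCrossing
  | succ i hi ih => exact (ih (by omega)).next (hZ.isCrossing_succ hi hik)

lemma rside_mono (hZ : IsDrainage G S T p k Z) {i j : ℕ} (hi : 1 ≤ i) (hij : i ≤ j)
    (hjk : j ≤ k) :
    Rside G (Z i) S ⊆ Rside G (Z j) S := by
  induction j, hij using Nat.le_induction with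
  | base => exact subset_rfl
  | succ j hij ih =>
    exact (ih (by omega)).trans <| rside_subset_rside fun _ _ h =>
      (hZ.isCrossing_succ (by omega) hjk).notMem_of_deprive h

end IsDrainage

theorem drainage_disjoint_and_nested_general
    (G : SimpleGraph V) (S T : Set V)
    (p k : ℕ) (Z : ℕ → Finset (Sym2 V)) (hZ : IsDrainage G S T p k Z) :
    (∀ i j, 1 ≤ i → i < j → j ≤ k → Disjoint (Z i) (Z j)) ∧
    (∀ i, 1 ≤ i → i < k → Rside G (Z i) S ⊂ Rside G (Z (i + 1)) S) := by
  refine ⟨fun i j hi hij hjk => ?_, fun i hi hik => ?_⟩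
  · obtain ⟨j, rfl⟩ : ∃ j', j = j' + 1 := ⟨j - 1, by omega⟩
    exact (hZ.isCrossing hi (by omega)).disjoint (hZ.rside_mono hi (by omega) (by omega))
      fun _ _ h => (hZ.isCrossing_succ (by omega) hjk).notMem_of_deprive h
  · exact (hZ.isCrossing hi hik.le).rside_ssubset (hZ.nonempty hi hik.le)
      fun _ _ h => (hZ.isCrossing_succ hi hik).notMem_of_deprive h

/-- The drainage cuts are pairwise disjoint edge sets and their
source-side reachable sets are strictly nested. -/
theorem drainage_disjoint_and_nested
    [Fintype V] (G : SimpleGraph V) (S T : Set V) (hST : Disjoint S T)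
    (p k : ℕ) (Z : ℕ → Finset (Sym2 V)) (hZ : IsDrainage G S T p k Z) :
    (∀ i j, 1 ≤ i → i < j → j ≤ k → Disjoint (Z i) (Z j)) ∧
    (∀ i, 1 ≤ i → i < k → Rside G (Z i) S ⊂ Rside G (Z (i + 1)) S) :=
  drainage_disjoint_and_nested_general G S T p k Z hZ
end
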